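/- Let 𝓐 generate a C₀-semigroup of multiplication operators (e^{t𝓐})_{t≥0} on L^p(Ω,X), 1 ≤ p < ∞, with ‖e^{t𝓐}‖ ≤ M for all t ≥ 0. If the pointwise semigroups (e^{tA(s)})_{t≥0} are strongly stable for almost all s ∈ Ω (i.e., ‖e^{tA(s)}x‖ → 0 for every x ∈ X), then the multiplication semigroup (e^{t𝓐})_{t≥0} is strongly stable on L^p(Ω,X). -/

import Mathlib

/-!
Testing a bounded multiplication operator `T` with multiplier `B` on the functions `1_S x`,
`μ S < ∞`, bounds the `L^p(S)` norm of `B · x` by `‖T‖ ‖x‖ μ(S)^{1/p}`; by σ-finiteness this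
gives `‖B s x‖ ≤ ‖T‖ ‖x‖` almost everywhere, and a countable dense subset of `E` makes the bound
uniform in `x`. So `‖T t f‖` is dominated pointwise by `M ‖f‖`, and strong stability follows
from dominated convergence.
-/

open MeasureTheory Filter Topology ENNReal

namespace MeasureTheory

variable {Ω E : Type*} [MeasurableSpace Ω] {μ : Measure Ω} [NormedAddCommGroup E] {p : ℝ≥0∞}

theorem ae_enorm_le_of_forall_eLpNorm_restrict_le [SigmaFinite μ] (hp0 : p ≠ 0) (hp : p ≠ ∞)
    {f : Ω → E} (hf : AEStronglyMeasurable f μ) {C : ℝ≥0∞}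
    (h : ∀ S, MeasurableSet S → μ S < ∞ → eLpNorm f p (μ.restrict S) ≤ C * μ S ^ (1 / p.toReal)) :
    ∀ᵐ s ∂μ, ‖f s‖ₑ ≤ C := by
  have hq : 0 < p.toReal := toReal_pos hp0 hp
  have hpow : (fun s => ‖f s‖ₑ ^ p.toReal) ≤ᵐ[μ] fun _ => C ^ p.toReal := by
    refine ae_le_of_forall_setLIntegral_le_of_sigmaFinite₀ (hf.enorm.pow_const _)
      fun S hS hμS => ?_
    calc ∫⁻ s in S, ‖f s‖ₑ ^ p.toReal ∂μ = eLpNorm f p (μ.restrict S) ^ p.toReal := by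
          rw [eLpNorm_eq_lintegral_rpow_enorm_toReal hp0 hp, ← rpow_mul, one_div_mul_cancel hq.ne',
            rpow_one]
      _ ≤ (C * μ S ^ (1 / p.toReal)) ^ p.toReal := by gcongr; exact h S hS hμS
      _ = ∫⁻ _ in S, C ^ p.toReal ∂μ := by
          rw [setLIntegral_const, mul_rpow_of_nonneg _ _ hq.le, ← rpow_mul,
            one_div_mul_cancel hq.ne', rpow_one]
  filter_upwards [hpow] with s hs using (rpow_le_rpow_iff hq).1 hs

theorem tendsto_eLpNorm_zero_of_dominated (hp0 : p ≠ 0) (hp : p ≠ ∞) {ι : Type*} {l : Filter ι}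
    [l.IsCountablyGenerated] {F : ι → Ω → E} {g : Ω → ℝ}
    (hF : ∀ᶠ i in l, AEStronglyMeasurable (F i) μ) (hg : MemLp g p μ)
    (h_bound : ∀ᶠ i in l, ∀ᵐ s ∂μ, ‖F i s‖ ≤ g s)
    (h_lim : ∀ᵐ s ∂μ, Tendsto (fun i => F i s) l (𝓝 0)) :
    Tendsto (fun i => eLpNorm (F i) p μ) l (𝓝 0) := by
  have hq : 0 < p.toReal := toReal_pos hp0 hp
  suffices Tendsto (fun i => ∫⁻ s, ‖F i s‖ₑ ^ p.toReal ∂μ) l (𝓝 0) by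
    simp only [eLpNorm_eq_lintegral_rpow_enorm_toReal hp0 hp]
    simpa [zero_rpow_of_pos (inv_pos.2 hq)] using this.ennrpow_const p.toReal⁻¹
  have h_bound' : ∀ᶠ i in l, ∀ᵐ s ∂μ, ‖F i s‖ₑ ^ p.toReal ≤ ‖g s‖ₑ ^ p.toReal := by
    filter_upwards [h_bound] with i hi
    filter_upwards [hi] with s hs
    gcongr
    exact enorm_le_iff_norm_le.2 (hs.trans (Real.le_norm_self _))
  have h_lim' : ∀ᵐ s ∂μ, Tendsto (fun i => ‖F i s‖ₑ ^ p.toReal) l (𝓝 0) := by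
    filter_upwards [h_lim] with s hs
    simpa [zero_rpow_of_pos hq] using hs.enorm.ennrpow_const p.toReal
  simpa using tendsto_lintegral_filter_of_dominated_convergence' _
    (hF.mono fun i hi => hi.enorm.pow_const _) h_bound'
    (lintegral_rpow_enorm_lt_top_of_eLpNorm_lt_top hp0 hp hg.2).ne h_lim'

theorem Lp.tendsto_norm_zero_of_dominated [Fact (1 ≤ p)] (hp : p ≠ ∞) {ι : Type*} {l : Filter ι}
    [l.IsCountablyGenerated] (F : ι → Lp E p μ) {g : Ω → ℝ} (hg : MemLp g p μ)
    (h_bound : ∀ᶠ i in l, ∀ᵐ s ∂μ, ‖F i s‖ ≤ g s)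
    (h_lim : ∀ᵐ s ∂μ, Tendsto (fun i => F i s) l (𝓝 0)) :
    Tendsto (fun i => ‖F i‖) l (𝓝 0) := by
  have hp0 : p ≠ 0 := (zero_lt_one.trans_le (Fact.out : 1 ≤ p)).ne'
  simpa [Lp.norm_def, Function.comp_def] using (ENNReal.tendsto_toReal zero_ne_top).comp
    (tendsto_eLpNorm_zero_of_dominated hp0 hp (.of_forall fun i => Lp.aestronglyMeasurable (F i))
      hg h_bound h_lim)

section Multiplication

variable {𝕜 : Type*} [NontriviallyNormedField 𝕜] [NormedSpace 𝕜 E] [Fact (1 ≤ p)]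

def IsMultiplicationOperator (T : Lp E p μ →L[𝕜] Lp E p μ) (B : Ω → E →L[𝕜] E) : Prop :=
  ∀ f : Lp E p μ, ∀ᵐ s ∂μ, T f s = B s (f s)

namespace IsMultiplicationOperator

variable {T : Lp E p μ →L[𝕜] Lp E p μ} {B : Ω → E →L[𝕜] E}

theorem ae_restrict_apply_indicatorConstLp (hT : IsMultiplicationOperator T B) {S : Set Ω}
    (hS : MeasurableSet S) (hμS : μ S ≠ ∞) (x : E) :
    ∀ᵐ s ∂μ.restrict S, T (indicatorConstLp p hS hμS x) s = B s x := by
  filter_upwards [ae_restrict_of_ae (hT _), ae_restrict_of_ae (indicatorConstLp_coeFn (hs := hS) (hμs := hμS) (c := x)),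
    ae_restrict_mem hS] with s hTs hind hs
  rw [hTs, hind, Set.indicator_of_mem hs]

theorem aestronglyMeasurable_apply [SigmaFinite μ] (hT : IsMultiplicationOperator T B) (x : E) :
    AEStronglyMeasurable (fun s => B s x) μ := by
  rw [← Measure.restrict_univ (μ := μ), ← iUnion_spanningSets μ, aestronglyMeasurable_iUnion_iff]
  exact fun n => (Lp.aestronglyMeasurable _).restrict.congr
    (hT.ae_restrict_apply_indicatorConstLp (measurableSet_spanningSets μ n)
      (measure_spanningSets_lt_top μ n).ne x)

theorem ae_enorm_apply_le [SigmaFinite μ] (hp : p ≠ ∞) (hT : IsMultiplicationOperator T B)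
    (x : E) : ∀ᵐ s ∂μ, ‖B s x‖ₑ ≤ ‖T‖ₑ * ‖x‖ₑ := by
  have hp0 : p ≠ 0 := (zero_lt_one.trans_le (Fact.out : 1 ≤ p)).ne'
  refine ae_enorm_le_of_forall_eLpNorm_restrict_le hp0 hp (hT.aestronglyMeasurable_apply x)
    fun S hS hμS => ?_
  set g := indicatorConstLp p hS hμS.ne x
  calc eLpNorm (fun s => B s x) p (μ.restrict S) = eLpNorm (T g) p (μ.restrict S) :=
        (eLpNorm_congr_ae (hT.ae_restrict_apply_indicatorConstLp hS hμS.ne x)).symm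
    _ ≤ eLpNorm (T g) p μ := eLpNorm_mono_measure _ Measure.restrict_le_self
    _ = ‖T g‖ₑ := (Lp.enorm_def _).symm
    _ ≤ ‖T‖ₑ * ‖g‖ₑ := T.le_opENorm g
    _ ≤ ‖T‖ₑ * (‖x‖ₑ * μ S ^ (1 / p.toReal)) := by gcongr; exact enorm_indicatorConstLp_le
    _ = ‖T‖ₑ * ‖x‖ₑ * μ S ^ (1 / p.toReal) := (mul_assoc ..).symm

theorem ae_opNorm_le [SigmaFinite μ] [TopologicalSpace.SeparableSpace E] (hp : p ≠ ∞)
    (hT : IsMultiplicationOperator T B) : ∀ᵐ s ∂μ, ‖B s‖ ≤ ‖T‖ := by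
  obtain ⟨D, hDc, hDd⟩ := TopologicalSpace.exists_countable_dense E
  filter_upwards [(ae_ball_iff hDc).2 fun x _ => hT.ae_enorm_apply_le hp x] with s hs
  refine (B s).opNorm_le_bound (norm_nonneg T) fun x => hDd.induction (fun y hy => ?_)
    (isClosed_le (by fun_prop) (by fun_prop)) x
  have := hs y hy
  rw [← ofReal_norm, ← ofReal_norm, ← ofReal_norm, ← ofReal_mul (norm_nonneg _),
    ofReal_le_ofReal_iff (by positivity)] at this
  exact this

end IsMultiplicationOperator

end Multiplication

end MeasureTheory

theorem stmt5_general {Ω X : Type*} [MeasurableSpace Ω] [NormedAddCommGroup X]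
    [NormedSpace ℂ X] [TopologicalSpace.SeparableSpace X]
    (μ : Measure Ω) [SigmaFinite μ]
    (p : ℝ≥0∞) [Fact (1 ≤ p)] (hp : p ≠ ⊤)
    (T : ℝ → Lp X p μ →L[ℂ] Lp X p μ)
    (M : ℝ) (hbound : ∀ t : ℝ, 0 ≤ t → ‖T t‖ ≤ M)
    (A : ℝ → Ω → X →L[ℂ] X)
    (hpt : ∀ t : ℝ, 0 ≤ t → ∀ f : Lp X p μ,
      ∀ᵐ s ∂μ, (T t f : Ω →ₘ[μ] X) s = A t s ((f : Ω →ₘ[μ] X) s))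
    (hstab : ∀ᵐ s ∂μ, ∀ x : X, Tendsto (fun t : ℝ => ‖A t s x‖) atTop (𝓝 0)) :
    ∀ f : Lp X p μ, Tendsto (fun t : ℝ => ‖T t f‖) atTop (𝓝 0) := by
  have hA : ∀ t, 0 ≤ t → ∀ᵐ s ∂μ, ‖A t s‖ ≤ M := fun t ht =>
    (IsMultiplicationOperator.ae_opNorm_le hp (hpt t ht)).mono fun s hs => hs.trans (hbound t ht)
  intro f
  -- `T t f = A t · (f ·)` holds only almost everywhere for each `t`, so pass to sequences.
  refine tendsto_iff_seq_tendsto.2 fun u hu => ?_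
  have hu0 : ∀ᶠ n in atTop, 0 ≤ u n := hu.eventually_ge_atTop 0
  have hTu : ∀ᵐ s ∂μ, ∀ n, 0 ≤ u n → T (u n) f s = A (u n) s (f s) :=
    ae_all_iff.2 fun n => eventually_imp_distrib_left.2 fun hn => hpt _ hn f
  refine Lp.tendsto_norm_zero_of_dominated hp (fun n => T (u n) f)
    ((Lp.memLp f).norm.const_mul M) ?_ ?_
  · filter_upwards [hu0] with n hn
    filter_upwards [hpt _ hn f, hA _ hn] with s hs hAs
    rw [hs]
    exact (A _ s).le_of_opNorm_le hAs _
  · filter_upwards [hTu, hstab] with s hs hAs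
    rw [tendsto_zero_iff_norm_tendsto_zero]
    exact ((hAs (f s)).comp hu).congr' (hu0.mono fun n hn => by simp [hs n hn])

/-- If a uniformly bounded multiplication semigroup `(e^{t𝓐})` on
`L^p(Ω,X)` (`1 ≤ p < ∞`) has pointwise semigroups that are strongly stable for almost
all `s`, then the multiplication semigroup is strongly stable. -/
theorem stmt5 {Ω X : Type*} [MeasurableSpace Ω] [NormedAddCommGroup X]
    [NormedSpace ℂ X] [CompleteSpace X] [TopologicalSpace.SeparableSpace X]
    (μ : Measure Ω) [SigmaFinite μ]
    (hfsp : ∀ Y : Set Ω, MeasurableSet Y → 0 < μ Y →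
      ∃ Z : Set Ω, MeasurableSet Z ∧ Z ⊆ Y ∧ 0 < μ Z ∧ μ Z < ⊤)
    (p : ℝ≥0∞) [Fact (1 ≤ p)] (hp : p ≠ ⊤)
    (T : ℝ → Lp X p μ →L[ℂ] Lp X p μ)
    (hT0 : T 0 = 1)
    (hTadd : ∀ t r : ℝ, 0 ≤ t → 0 ≤ r → T (t + r) = (T t).comp (T r))
    (hTcont : ∀ f : Lp X p μ, ContinuousOn (fun t => T t f) (Set.Ici 0))
    (M : ℝ) (hM : 0 < M) (hbound : ∀ t : ℝ, 0 ≤ t → ‖T t‖ ≤ M)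
    (A : ℝ → Ω → X →L[ℂ] X)
    (hpt : ∀ t : ℝ, 0 ≤ t → ∀ f : Lp X p μ,
      ∀ᵐ s ∂μ, (T t f : Ω →ₘ[μ] X) s = A t s ((f : Ω →ₘ[μ] X) s))
    (hstab : ∀ᵐ s ∂μ, ∀ x : X, Tendsto (fun t : ℝ => ‖A t s x‖) atTop (𝓝 0)) :
    ∀ f : Lp X p μ, Tendsto (fun t : ℝ => ‖T t f‖) atTop (𝓝 0) :=
  stmt5_general μ p hp T M hbound A hpt hstab
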